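/- arXiv:2509.14421 — 2 statements merged into one kernel-verified Lean document; each statement's English description precedes it below -/
import Mathlib

section
/- Let A be symmetric positive definite 3×3, v ≠ 0, r ∈ ℝ³ with rᵀAr > c², c > 0. If there exists t₀ ≥ 0 such that (r − t₀·v)ᵀA(r − t₀·v) ≤ c², then (vᵀAv)(rᵀAr − c²) − (rᵀAv)² ≤ 0 and rᵀAv > 0. -/
open Matrix

/-!
Put `a = vᵀAv`, `b = rᵀAv`, `p = rᵀAr - c²`. By symmetry of `A`,
`φ(t) = (r - t v)ᵀA(r - t v) - c² = a t² - 2 b t + p`, and `a φ(t) = (a t - b)² + (a p - b²)`,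
so `φ(t₀) ≤ 0` and `a ≥ 0` force `a p - b² ≤ 0`. Since `φ(0) = p > 0`, the point `t₀` is positive,
and `0 < p + a t₀² ≤ 2 b t₀` gives `b > 0`.
-/

theorem Matrix.IsSymm.dotProduct_mulVec_comm {n R : Type*} [Fintype n] [CommSemiring R]
    {A : Matrix n n R} (hA : A.IsSymm) (v w : n → R) :
    v ⬝ᵥ A *ᵥ w = w ⬝ᵥ A *ᵥ v := by
  rw [dotProduct_mulVec, ← mulVec_transpose, hA.eq, dotProduct_comm]

theorem Matrix.IsSymm.dotProduct_mulVec_sub_smul {n R : Type*} [Fintype n] [CommRing R]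
    {A : Matrix n n R} (hA : A.IsSymm) (r v : n → R) (t : R) :
    (r - t • v) ⬝ᵥ A *ᵥ (r - t • v) =
      t ^ 2 * (v ⬝ᵥ A *ᵥ v) - 2 * (r ⬝ᵥ A *ᵥ v) * t + r ⬝ᵥ A *ᵥ r := by
  simp only [sub_dotProduct, mulVec_sub, dotProduct_sub, smul_dotProduct, mulVec_smul,
    dotProduct_smul, smul_eq_mul, hA.dotProduct_mulVec_comm v r]
  ring

section QuadraticWithNonposValue

variable {a b p t : ℝ}

theorem discrim_nonpos_of_quadratic_nonpos (ha : 0 ≤ a) (ht : a * t ^ 2 - 2 * b * t + p ≤ 0) :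
    a * p - b ^ 2 ≤ 0 := by
  calc a * p - b ^ 2 = a * (a * t ^ 2 - 2 * b * t + p) - (a * t - b) ^ 2 := by ring
    _ ≤ 0 := sub_nonpos_of_le ((mul_nonpos_of_nonneg_of_nonpos ha ht).trans (sq_nonneg _))

theorem linear_coeff_pos_of_quadratic_nonpos (ha : 0 ≤ a) (hp : 0 < p) (ht₀ : 0 ≤ t)
    (ht : a * t ^ 2 - 2 * b * t + p ≤ 0) : 0 < b := by
  have hbt : 0 < b * t := by nlinarith [mul_nonneg ha (sq_nonneg t)]
  exact pos_of_mul_pos_left hbt ht₀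

end QuadraticWithNonposValue

theorem collision_cone_necessity_general
    (A : Matrix (Fin 3) (Fin 3) ℝ) (hA : A.PosDef)
    (v : Fin 3 → ℝ) (r : Fin 3 → ℝ)
    (c : ℝ) (hout : r ⬝ᵥ A *ᵥ r > c ^ 2)
    (t₀ : ℝ) (ht₀ : 0 ≤ t₀)
    (hcoll : (r - t₀ • v) ⬝ᵥ A *ᵥ (r - t₀ • v) ≤ c ^ 2) :
    (v ⬝ᵥ A *ᵥ v) * (r ⬝ᵥ A *ᵥ r - c ^ 2) - (r ⬝ᵥ A *ᵥ v) ^ 2 ≤ 0 ∧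
      0 < r ⬝ᵥ A *ᵥ v := by
  have hsymm : A.IsSymm := by simpa using hA.isHermitian
  have ha : 0 ≤ v ⬝ᵥ A *ᵥ v := by simpa using hA.posSemidef.dotProduct_mulVec_nonneg v
  have hφ : (v ⬝ᵥ A *ᵥ v) * t₀ ^ 2 - 2 * (r ⬝ᵥ A *ᵥ v) * t₀ + (r ⬝ᵥ A *ᵥ r - c ^ 2) ≤ 0 := by
    rw [hsymm.dotProduct_mulVec_sub_smul] at hcoll
    linarith
  exact ⟨discrim_nonpos_of_quadratic_nonpos ha hφ,
    linear_coeff_pos_of_quadratic_nonpos ha (sub_pos.mpr hout) ht₀ hφ⟩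

theorem collision_cone_necessity
    (A : Matrix (Fin 3) (Fin 3) ℝ) (hA : A.PosDef)
    (v : Fin 3 → ℝ) (hv : v ≠ 0) (r : Fin 3 → ℝ)
    (c : ℝ) (hc : 0 < c) (hout : r ⬝ᵥ A *ᵥ r > c ^ 2)
    (t₀ : ℝ) (ht₀ : 0 ≤ t₀)
    (hcoll : (r - t₀ • v) ⬝ᵥ A *ᵥ (r - t₀ • v) ≤ c ^ 2) :
    (v ⬝ᵥ A *ᵥ v) * (r ⬝ᵥ A *ᵥ r - c ^ 2) - (r ⬝ᵥ A *ᵥ v) ^ 2 ≤ 0 ∧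
      0 < r ⬝ᵥ A *ᵥ v :=
  collision_cone_necessity_general A hA v r c hout t₀ ht₀ hcoll
end

section
/- Let A be symmetric positive definite 3×3, r, v ∈ ℝ³, and c > 0. Define h(r,v) = (vᵀAv)(rᵀAr − c²) − (rᵀAv)². If v = 0 then h(r,v) = 0, and if rᵀAr > c² and h(r,v) > 0 then for all t ≥ 0, (r − t·v)ᵀA(r − t·v) > c². -/
open Matrix

theorem lt_sub_two_mul_add_sq_mul {K : Type*} [Field K] [LinearOrder K] [IsStrictOrderedRing K]
    {R B V m : K} (hR : m < R) (hdisc : B ^ 2 < V * (R - m)) (t : K) :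
    m < R - 2 * t * B + t ^ 2 * V := by
  have hV : 0 < V := pos_of_mul_pos_left ((sq_nonneg B).trans_lt hdisc) (sub_pos.2 hR).le
  have hsquare : V * (R - 2 * t * B + t ^ 2 * V - m) = (t * V - B) ^ 2 + (V * (R - m) - B ^ 2) := by
    ring
  have hprod : 0 < V * (R - 2 * t * B + t ^ 2 * V - m) := by
    rw [hsquare]
    exact add_pos_of_nonneg_of_pos (sq_nonneg _) (sub_pos.2 hdisc)
  exact sub_pos.1 (pos_of_mul_pos_right hprod hV.le)

namespace Matrix

variable {n K : Type*} [Fintype n]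

theorem IsSymm.dotProduct_mulVec_comm_s6 [CommSemiring K] {A : Matrix n n K} (hA : A.IsSymm)
    (x y : n → K) : x ⬝ᵥ A *ᵥ y = y ⬝ᵥ A *ᵥ x := by
  simpa only [hA.eq] using dotProduct_transpose_mulVec A x y

theorem IsSymm.dotProduct_mulVec_sub_smul_s6 [CommRing K] {A : Matrix n n K} (hA : A.IsSymm)
    (r v : n → K) (t : K) :
    (r - t • v) ⬝ᵥ A *ᵥ (r - t • v) =
      r ⬝ᵥ A *ᵥ r - 2 * t * (r ⬝ᵥ A *ᵥ v) + t ^ 2 * (v ⬝ᵥ A *ᵥ v) := by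
  simp only [mulVec_sub, mulVec_smul, dotProduct_sub, sub_dotProduct, dotProduct_smul,
    smul_dotProduct, smul_eq_mul, hA.dotProduct_mulVec_comm_s6 v r]
  ring

theorem IsSymm.lt_dotProduct_mulVec_sub_smul [Field K] [LinearOrder K] [IsStrictOrderedRing K]
    {A : Matrix n n K} (hA : A.IsSymm) {r v : n → K} {m : K} (hr : m < r ⬝ᵥ A *ᵥ r)
    (hdisc : (r ⬝ᵥ A *ᵥ v) ^ 2 < (v ⬝ᵥ A *ᵥ v) * (r ⬝ᵥ A *ᵥ r - m)) (t : K) :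
    m < (r - t • v) ⬝ᵥ A *ᵥ (r - t • v) := by
  rw [hA.dotProduct_mulVec_sub_smul_s6]
  exact lt_sub_two_mul_add_sq_mul hr hdisc t

end Matrix

theorem cbf_positivity_implies_no_collision_general
    (A : Matrix (Fin 3) (Fin 3) ℝ) (hA : A.PosDef)
    (r v : Fin 3 → ℝ) (c : ℝ)
    (h : (Fin 3 → ℝ) → (Fin 3 → ℝ) → ℝ)
    (hdef : h = fun r v =>
      (v ⬝ᵥ A *ᵥ v) * (r ⬝ᵥ A *ᵥ r - c ^ 2) - (r ⬝ᵥ A *ᵥ v) ^ 2) :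
    (v = 0 → h r v = 0) ∧
      (r ⬝ᵥ A *ᵥ r > c ^ 2 → 0 < h r v →
        ∀ t : ℝ, 0 ≤ t → (r - t • v) ⬝ᵥ A *ᵥ (r - t • v) > c ^ 2) := by
  subst hdef
  refine ⟨fun hv => by simp [hv], fun hr hpos t _ => ?_⟩
  have hsymm : A.IsSymm := isHermitian_iff_isSymm.1 hA.isHermitian
  exact hsymm.lt_dotProduct_mulVec_sub_smul hr (sub_pos.1 hpos) t

theorem cbf_positivity_implies_no_collision
    (A : Matrix (Fin 3) (Fin 3) ℝ) (hA : A.PosDef)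
    (r v : Fin 3 → ℝ) (c : ℝ) (hc : 0 < c)
    (h : (Fin 3 → ℝ) → (Fin 3 → ℝ) → ℝ)
    (hdef : h = fun r v =>
      (v ⬝ᵥ A *ᵥ v) * (r ⬝ᵥ A *ᵥ r - c ^ 2) - (r ⬝ᵥ A *ᵥ v) ^ 2) :
    (v = 0 → h r v = 0) ∧
      (r ⬝ᵥ A *ᵥ r > c ^ 2 → 0 < h r v →
        ∀ t : ℝ, 0 ≤ t → (r - t • v) ⬝ᵥ A *ᵥ (r - t • v) > c ^ 2) :=
  cbf_positivity_implies_no_collision_general A hA r v c h hdef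
end
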